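/- Let X be an intrinsic δ-hyperbolic space with conformal deformation d_ε, 0 < ε ≤ ε₀. Then every Gromov sequence (u_n) in X is a Cauchy sequence in (X, d_ε) that does not converge in X, and two Gromov sequences (u_n), (v_n) are equivalent (i.e., (u_n|v_n)_p → ∞) if and only if d_ε(u_n, v_n) → 0. -/

import Mathlib

open Set Filter Metric MeasureTheory

/-- Conformal density `ρ_ε(x) = exp(-ε d(x,p))`. -/
noncomputable def rho {X : Type*} [MetricSpace X] (ε : ℝ) (p x : X) : ℝ :=
  Real.exp (-(ε * dist x p))

/-- `γ : [0,L] → X` is a curve parametrized by arclength: continuous, and the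
length (total variation) of `γ` on `[s,t] ⊆ [0,L]` equals `t - s`. -/
def IsUnitSpeed {X : Type*} [MetricSpace X] (γ : ℝ → X) (L : ℝ) : Prop :=
  ContinuousOn γ (Set.Icc 0 L) ∧
    ∀ s t : ℝ, 0 ≤ s → s ≤ t → t ≤ L →
      eVariationOn γ (Set.Icc s t) = ENNReal.ofReal (t - s)

/-- Conformal deformation distance `d_ρ(x,y) = inf_γ ∫_γ ρ ds`, the infimum taken
over rectifiable curves from `x` to `y` (parametrized by arclength). -/
noncomputable def confDist {X : Type*} [MetricSpace X] (ρ : X → ℝ) (x y : X) : ℝ :=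
  sInf { l : ℝ | ∃ (γ : ℝ → X) (T : ℝ), 0 ≤ T ∧ IsUnitSpeed γ T ∧
    γ 0 = x ∧ γ T = y ∧ l = ∫ t in (0:ℝ)..T, ρ (γ t) }

/-- `X` is intrinsic: any two points can be joined, for each `c > 1`, by a curve
of length at most `c·d(x,y)`. -/
def Intrinsic (X : Type*) [MetricSpace X] : Prop :=
  ∀ x y : X, ∀ c : ℝ, 1 < c → ∃ (γ : ℝ → X) (T : ℝ), 0 ≤ T ∧ IsUnitSpeed γ T ∧
    γ 0 = x ∧ γ T = y ∧ T ≤ c * dist x y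

/-- Gromov product `(x|y)_p`. -/
noncomputable def gprod {X : Type*} [MetricSpace X] (x y p : X) : ℝ :=
  (dist x p + dist y p - dist x y) / 2

/-- `X` is Gromov `δ`-hyperbolic. -/
def GromovHyperbolic (X : Type*) [MetricSpace X] (δ : ℝ) : Prop :=
  ∀ x y z p : X, gprod x z p ≥ min (gprod x y p) (gprod y z p) - δ

/-- A sequence is Cauchy with respect to a (possibly different) distance function `d`. -/
def CauchyIn {X : Type*} (d : X → X → ℝ) (u : ℕ → X) : Prop :=
  ∀ η : ℝ, 0 < η → ∃ N : ℕ, ∀ m n : ℕ, N ≤ m → N ≤ n → d (u m) (u n) < η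

/-- A sequence does not converge to any point of `X` with respect to `d`. -/
def DivergesIn {X : Type*} (d : X → X → ℝ) (u : ℕ → X) : Prop :=
  ¬ ∃ z : X, Filter.Tendsto (fun n => d (u n) z) Filter.atTop (nhds 0)

/-- A sequence representing a point of the metric boundary of `(X, d)`:
`d`-Cauchy but not `d`-convergent in `X`. -/
def BoundarySeq {X : Type*} (d : X → X → ℝ) (u : ℕ → X) : Prop :=
  CauchyIn d u ∧ DivergesIn d u

/-- Distance from `z` to the metric boundary of `(X,d)`: infimum, over boundary
points (represented by Cauchy non-convergent sequences), of the limiting distance. -/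
noncomputable def bdryDist {X : Type*} (d : X → X → ℝ) (z : X) : ℝ :=
  sInf { r : ℝ | ∃ u : ℕ → X, BoundarySeq d u ∧
    Filter.Tendsto (fun n => d z (u n)) Filter.atTop (nhds r) }

/-- A Gromov sequence: `(u_i|u_j)_p → ∞` as `i, j → ∞`. -/
def GromovSeq {X : Type*} [MetricSpace X] (p : X) (u : ℕ → X) : Prop :=
  Filter.Tendsto (fun nm : ℕ × ℕ => gprod (u nm.1) (u nm.2) p)
    Filter.atTop Filter.atTop

section Aux
variable {X : Type*} [MetricSpace X]

lemma gprod_le_left (x y p : X) : gprod x y p ≤ dist x p := by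
  have h := dist_triangle y x p
  rw [dist_comm y x] at h
  unfold gprod; linarith

lemma gprod_le_right (x y p : X) : gprod x y p ≤ dist y p := by
  have h := dist_triangle x y p
  unfold gprod; linarith

lemma gprod_self (x p : X) : gprod x x p = dist x p := by
  unfold gprod; simp

lemma dist_le_gprod_add (x y p : X) : dist x p ≤ gprod x y p + dist x y := by
  have h := dist_triangle x y p
  unfold gprod; linarith

lemma gprod_ge_of_dist (x y p : X) : dist x p - dist x y ≤ gprod x y p := by
  have h := dist_triangle x y p
  unfold gprod; linarith

lemma IsUnitSpeed.dist_le {γ : ℝ → X} {T : ℝ} (h : IsUnitSpeed γ T) {s t : ℝ}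
    (hs : 0 ≤ s) (hst : s ≤ t) (ht : t ≤ T) : dist (γ s) (γ t) ≤ t - s := by
  have h1 := h.2 s t hs hst ht
  have h2 := eVariationOn.edist_le γ (show s ∈ Icc s t from ⟨le_refl s, hst⟩)
    (show t ∈ Icc s t from ⟨hst, le_refl t⟩)
  rw [h1, edist_dist] at h2
  exact (ENNReal.ofReal_le_ofReal_iff (by linarith)).mp h2

lemma continuous_rho (ε : ℝ) (p : X) : Continuous (rho ε p) := by
  unfold rho
  exact Real.continuous_exp.comp ((continuous_const.mul (continuous_id.dist continuous_const)).neg)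

lemma integral_exp_linear (c C a b : ℝ) (hc : c ≠ 0) :
    ∫ t in a..b, Real.exp (c*t + C) = (Real.exp (c*b+C) - Real.exp (c*a+C))/c := by
  have hderiv : ∀ t ∈ Set.uIcc a b,
      HasDerivAt (fun t => Real.exp (c*t + C)/c) (Real.exp (c*t+C)) t := by
    intro t _
    have h1 : HasDerivAt (fun t : ℝ => c*t+C) c t := by
      simpa using ((hasDerivAt_id t).const_mul c).add_const C
    have h2 := (Real.hasDerivAt_exp (c*t+C)).comp t h1
    have h3 := h2.div_const c
    simpa [Function.comp, mul_div_cancel_right₀ _ hc] using h3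
  rw [intervalIntegral.integral_eq_sub_of_hasDerivAt hderiv
    ((Real.continuous_exp.comp ((continuous_const.mul continuous_id).add continuous_const)).intervalIntegrable a b)]
  ring

end Aux

section Aux2
variable {X : Type*} [MetricSpace X]

def curveSet (ρ : X → ℝ) (x y : X) : Set ℝ :=
  { l : ℝ | ∃ (γ : ℝ → X) (T : ℝ), 0 ≤ T ∧ IsUnitSpeed γ T ∧
    γ 0 = x ∧ γ T = y ∧ l = ∫ t in (0:ℝ)..T, ρ (γ t) }

lemma curveSet_nonneg {ρ : X → ℝ} (hρ : ∀ z, 0 ≤ ρ z) {x y : X} :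
    ∀ l ∈ curveSet ρ x y, (0:ℝ) ≤ l := by
  rintro l ⟨γ, T, hT0, hγ, hγ0, hγT, rfl⟩
  exact intervalIntegral.integral_nonneg hT0 (fun t _ => hρ (γ t))

lemma curveSet_bddBelow {ρ : X → ℝ} (hρ : ∀ z, 0 ≤ ρ z) {x y : X} :
    BddBelow (curveSet ρ x y) := ⟨0, fun l hl => curveSet_nonneg hρ l hl⟩

lemma curveSet_nonempty (hint : Intrinsic X) (ρ : X → ℝ) (x y : X) :
    (curveSet ρ x y).Nonempty := by
  obtain ⟨γ, T, hT0, hγ, hγ0, hγT, -⟩ := hint x y 2 one_lt_two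
  exact ⟨_, γ, T, hT0, hγ, hγ0, hγT, rfl⟩

lemma rho_nonneg (ε : ℝ) (p : X) : ∀ z, 0 ≤ rho ε p z := fun z => (Real.exp_pos _).le

/-- Upper bound: `d_ε(x,y) ≤ (2e/ε) e^{-ε (x|y)_p}`. -/
lemma confDist_upper (hint : Intrinsic X) {ε : ℝ} (hε : 0 < ε) (p x y : X) :
    sInf (curveSet (rho ε p) x y) ≤ (2 * Real.exp 1 / ε) * Real.exp (-(ε * gprod x y p)) := by
  have hbdd := curveSet_bddBelow (rho_nonneg ε p) (x := x) (y := y)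
  rcases eq_or_ne x y with rfl | hxy
  · -- constant curve gives 0 in the set
    have hmem : (0:ℝ) ∈ curveSet (rho ε p) x x := by
      refine ⟨fun _ => x, 0, le_refl 0, ⟨continuousOn_const, ?_⟩, rfl, rfl, by simp⟩
      intro s t hs hst ht
      have hs0 : s = 0 := le_antisymm (hst.trans ht) hs
      have ht0 : t = 0 := le_antisymm ht (hs0 ▸ hst)
      subst hs0; subst ht0
      rw [eVariationOn.constant_on (by rintro a ⟨u, -, rfl⟩ b ⟨v, -, rfl⟩; rfl)]
      simp
    have h0 := csInf_le hbdd hmem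
    have hpos : 0 < (2 * Real.exp 1 / ε) * Real.exp (-(ε * gprod x x p)) := by positivity
    linarith
  · set d := dist x y with hd_def
    clear_value d
    have hd : 0 < d := by rw [hd_def]; exact dist_pos.mpr hxy
    set c : ℝ := 1 + 2/(ε*d) with hc_def
    clear_value c
    have hc : 1 < c := by
      rw [hc_def]
      have : 0 < 2/(ε*d) := by positivity
      linarith
    obtain ⟨γ, T, hT0, hγ, hγ0, hγT, hTle⟩ := hint x y c hc
    have hTd : T ≤ d + 2/ε := by
      have hcd : c * d = d + 2/ε := by
        rw [hc_def]; field_simp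
      rw [← hd_def] at hTle
      linarith [hTle]
    set A := dist x p with hA_def
    set B := dist y p with hB_def
    set m : ℝ := (A + B - T)/2 with hm_def
    set s : ℝ := (A - B + T)/2 with hs_def
    set s' : ℝ := min (max s 0) T with hs'_def
    clear_value A B m s s'
    have h0s' : 0 ≤ s' := by rw [hs'_def]; exact le_min (le_max_right _ _) hT0
    have hs'T : s' ≤ T := by rw [hs'_def]; exact min_le_right _ _
    have hcont : ContinuousOn (fun t => rho ε p (γ t)) (Icc 0 T) :=
      (continuous_rho ε p).comp_continuousOn hγ.1
    have hii : ∀ a b : ℝ, 0 ≤ a → a ≤ b → b ≤ T →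
        IntervalIntegrable (fun t => rho ε p (γ t)) volume a b := by
      intro a b ha hab hbT
      exact ((hcont.mono (Icc_subset_Icc ha hbT)).mono
        (by rw [uIcc_of_le hab])).intervalIntegrable
    have hpt1 : ∀ t ∈ Icc (0:ℝ) T, rho ε p (γ t) ≤ Real.exp (ε*t + -(ε*A)) := by
      intro t ht
      have h1 : dist (γ 0) (γ t) ≤ t - 0 := hγ.dist_le (le_refl 0) ht.1 ht.2
      have h2 := dist_triangle (γ 0) (γ t) p
      rw [hγ0] at h1 h2
      unfold rho
      apply Real.exp_le_exp.mpr
      nlinarith [hε]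
    have hpt2 : ∀ t ∈ Icc (0:ℝ) T, rho ε p (γ t) ≤ Real.exp ((-ε)*t + -(ε*(B-T))) := by
      intro t ht
      have h1 : dist (γ t) (γ T) ≤ T - t := hγ.dist_le ht.1 ht.2 (le_refl T)
      have h2 := dist_triangle (γ T) (γ t) p
      rw [dist_comm (γ T) (γ t)] at h2
      rw [hγT] at h1 h2
      unfold rho
      apply Real.exp_le_exp.mpr
      nlinarith [hε]
    have hsplit : (∫ t in (0:ℝ)..T, rho ε p (γ t)) =
        (∫ t in (0:ℝ)..s', rho ε p (γ t)) + ∫ t in s'..T, rho ε p (γ t) :=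
      (intervalIntegral.integral_add_adjacent_intervals (hii 0 s' (le_refl 0) h0s' hs'T)
        (hii s' T h0s' hs'T (le_refl T))).symm
    have hI1 : (∫ t in (0:ℝ)..s', rho ε p (γ t)) ≤ Real.exp (-(ε*m))/ε := by
      rcases le_or_gt s 0 with hs0 | hs0
      · have hzero : s' = 0 := by
          rw [hs'_def, max_eq_right hs0, min_eq_left hT0]
        rw [hzero, intervalIntegral.integral_same]
        positivity
      · have hss' : s' ≤ s := by
          rw [hs'_def, max_eq_left hs0.le]; exact min_le_left _ _
        have hmono : (∫ t in (0:ℝ)..s', rho ε p (γ t)) ≤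
            ∫ t in (0:ℝ)..s', Real.exp (ε*t + -(ε*A)) := by
          apply intervalIntegral.integral_mono_on h0s' (hii 0 s' (le_refl 0) h0s' hs'T)
            ((Real.continuous_exp.comp ((continuous_const.mul continuous_id).add continuous_const)).intervalIntegrable _ _)
          intro t ht
          exact hpt1 t ⟨ht.1, ht.2.trans hs'T⟩
        rw [integral_exp_linear ε (-(ε*A)) 0 s' hε.ne'] at hmono
        have h1 : Real.exp (ε*s' + -(ε*A)) ≤ Real.exp (-(ε*m)) := by
          apply Real.exp_le_exp.mpr
          have hAs : A - s = m := by rw [hs_def, hm_def]; ring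
          nlinarith [hε, hss']
        have h2 : 0 < Real.exp (ε*0 + -(ε*A)) := Real.exp_pos _
        calc (∫ t in (0:ℝ)..s', rho ε p (γ t)) ≤
            (Real.exp (ε*s' + -(ε*A)) - Real.exp (ε*0 + -(ε*A)))/ε := hmono
          _ ≤ Real.exp (-(ε*m))/ε := by gcongr; linarith
    have hI2 : (∫ t in s'..T, rho ε p (γ t)) ≤ Real.exp (-(ε*m))/ε := by
      rcases le_or_gt T s with hTs | hTs
      · have hzero : s' = T := by
          rw [hs'_def, min_eq_right]
          exact le_trans hTs (le_max_left _ _)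
        rw [hzero, intervalIntegral.integral_same]
        positivity
      · have hss' : s ≤ s' := by rw [hs'_def]; exact le_min (le_max_left _ _) hTs.le
        have hmono : (∫ t in s'..T, rho ε p (γ t)) ≤
            ∫ t in s'..T, Real.exp ((-ε)*t + -(ε*(B-T))) := by
          apply intervalIntegral.integral_mono_on hs'T (hii s' T h0s' hs'T (le_refl T))
            ((Real.continuous_exp.comp ((continuous_const.mul continuous_id).add continuous_const)).intervalIntegrable _ _)
          intro t ht
          exact hpt2 t ⟨h0s'.trans ht.1, ht.2⟩
        rw [integral_exp_linear (-ε) (-(ε*(B-T))) s' T (by linarith : (-ε) ≠ 0)] at hmono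
        have h1 : Real.exp ((-ε)*s' + -(ε*(B-T))) ≤ Real.exp (-(ε*m)) := by
          apply Real.exp_le_exp.mpr
          have hBs : B - T + s = m := by rw [hs_def, hm_def]; ring
          nlinarith [hε, hss']
        have h2 : 0 < Real.exp ((-ε)*T + -(ε*(B-T))) := Real.exp_pos _
        calc (∫ t in s'..T, rho ε p (γ t)) ≤
            (Real.exp ((-ε)*T + -(ε*(B-T))) - Real.exp ((-ε)*s' + -(ε*(B-T))))/(-ε) := hmono
          _ = (Real.exp ((-ε)*s' + -(ε*(B-T))) - Real.exp ((-ε)*T + -(ε*(B-T))))/ε := by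
              rw [div_neg, ← neg_div, neg_sub]
          _ ≤ Real.exp (-(ε*m))/ε := by gcongr; linarith
    have hmem : (∫ t in (0:ℝ)..T, rho ε p (γ t)) ∈ curveSet (rho ε p) x y :=
      ⟨γ, T, hT0, hγ, hγ0, hγT, rfl⟩
    have hle := csInf_le hbdd hmem
    have hmg : gprod x y p - 1/ε ≤ m := by
      unfold gprod
      rw [hm_def, hA_def, hB_def, ← hd_def]
      have h2ε : 2/ε = 2 * (1/ε) := by ring
      linarith [hTd]
    have hfin : Real.exp (-(ε*m)) ≤ Real.exp 1 * Real.exp (-(ε * gprod x y p)) := by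
      rw [← Real.exp_add]
      apply Real.exp_le_exp.mpr
      have h3 := mul_le_mul_of_nonneg_left hmg hε.le
      have h4 : ε * (1/ε) = 1 := mul_one_div_cancel hε.ne'
      nlinarith [h3, h4]
    calc sInf (curveSet (rho ε p) x y) ≤ (∫ t in (0:ℝ)..T, rho ε p (γ t)) := hle
      _ = (∫ t in (0:ℝ)..s', rho ε p (γ t)) + ∫ t in s'..T, rho ε p (γ t) := hsplit
      _ ≤ Real.exp (-(ε*m))/ε + Real.exp (-(ε*m))/ε := add_le_add hI1 hI2
      _ ≤ (Real.exp 1 * Real.exp (-(ε * gprod x y p)))/ε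
            + (Real.exp 1 * Real.exp (-(ε * gprod x y p)))/ε := by gcongr <;> exact hfin
      _ = (2 * Real.exp 1 / ε) * Real.exp (-(ε * gprod x y p)) := by ring
end Aux2

section Aux3
variable {X : Type*} [MetricSpace X]

/-- Cheap lower bound from the endpoint `y`. -/
lemma confDist_lower_cheap (hint : Intrinsic X) {ε : ℝ} (hε : 0 < ε) (p x y : X) :
    (1/ε) * Real.exp (-(ε * dist y p)) * (1 - Real.exp (-(ε * dist x y)))
      ≤ sInf (curveSet (rho ε p) x y) := by
  apply le_csInf (curveSet_nonempty hint _ x y)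
  rintro l ⟨γ, T, hT0, hγ, hγ0, hγT, rfl⟩
  set B := dist y p with hB_def
  have hdT : dist x y ≤ T := by
    have := hγ.dist_le (le_refl 0) hT0 (le_refl T)
    rw [hγ0, hγT] at this; linarith
  have hpt : ∀ t ∈ Icc (0:ℝ) T, Real.exp (ε*t + -(ε*(B+T))) ≤ rho ε p (γ t) := by
    intro t ht
    have h1 : dist (γ t) (γ T) ≤ T - t := hγ.dist_le ht.1 ht.2 (le_refl T)
    have h2 := dist_triangle (γ t) (γ T) p
    rw [hγT] at h1 h2
    unfold rho
    apply Real.exp_le_exp.mpr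
    nlinarith [hε]
  have hcont : ContinuousOn (fun t => rho ε p (γ t)) (Icc 0 T) :=
    (continuous_rho ε p).comp_continuousOn hγ.1
  have hmono : (∫ t in (0:ℝ)..T, Real.exp (ε*t + -(ε*(B+T))))
      ≤ ∫ t in (0:ℝ)..T, rho ε p (γ t) := by
    apply intervalIntegral.integral_mono_on hT0
      ((Real.continuous_exp.comp ((continuous_const.mul continuous_id).add
        continuous_const)).intervalIntegrable _ _)
      ((hcont.mono (by rw [uIcc_of_le hT0])).intervalIntegrable)
    exact hpt
  rw [integral_exp_linear ε (-(ε*(B+T))) 0 T hε.ne'] at hmono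
  have heq : (Real.exp (ε*T + -(ε*(B+T))) - Real.exp (ε*0 + -(ε*(B+T))))/ε
      = (1/ε) * Real.exp (-(ε * B)) * (1 - Real.exp (-(ε * T))) := by
    rw [show ε*T + -(ε*(B+T)) = -(ε*B) by ring, show ε*0 + -(ε*(B+T)) = -(ε*B) + -(ε*T) by ring,
      Real.exp_add]
    ring
  rw [heq] at hmono
  refine le_trans ?_ hmono
  have h1 : Real.exp (-(ε * T)) ≤ Real.exp (-(ε * dist x y)) := by
    apply Real.exp_le_exp.mpr
    nlinarith [hε]
  have h2 : 0 < Real.exp (-(ε*B)) := Real.exp_pos _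
  have h3 : Real.exp (-(ε * dist x y)) ≤ 1 := by
    rw [← Real.exp_zero]
    apply Real.exp_le_exp.mpr
    nlinarith [dist_nonneg (x := x) (y := y), hε]
  have h4 : (0:ℝ) < 1/ε := by positivity
  nlinarith [mul_le_mul_of_nonneg_left h1 (by positivity : (0:ℝ) ≤ 1/ε * Real.exp (-(ε*B)))]

/-- exponential form of hyperbolicity -/
lemma hyp_exp {δ : ℝ} (hhyp : GromovHyperbolic X δ) {ε : ℝ} (hε : 0 < ε) (p x y w : X) :
    Real.exp (-(ε * gprod x w p)) ≤ Real.exp (ε*δ) *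
      max (Real.exp (-(ε * gprod x y p))) (Real.exp (-(ε * gprod y w p))) := by
  have h := hhyp x y w p
  rcases le_total (gprod x y p) (gprod y w p) with hle | hle
  · rw [min_eq_left hle] at h
    rw [max_eq_left (Real.exp_le_exp.mpr (by nlinarith [hε]))]
    rw [← Real.exp_add]
    apply Real.exp_le_exp.mpr
    nlinarith [hε]
  · rw [min_eq_right hle] at h
    rw [max_eq_right (Real.exp_le_exp.mpr (by nlinarith [hε]))]
    rw [← Real.exp_add]
    apply Real.exp_le_exp.mpr
    nlinarith [hε]

/-- Chaining lemma: visual quasi-metric chain bound. -/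
lemma chain_lemma {δ : ℝ} (hδ : 0 ≤ δ) (p : X) (hhyp : GromovHyperbolic X δ)
    {ε : ℝ} (hε : 0 < ε) (hεδ : Real.exp (ε*δ) * Real.exp (ε*δ) ≤ 2) :
    ∀ n : ℕ, 1 ≤ n → ∀ z : ℕ → X,
      Real.exp (-(ε * gprod (z 0) (z n) p)) ≤
        2 * ∑ i ∈ Finset.range n, Real.exp (-(ε * gprod (z i) (z (i+1)) p)) := by
  have hlam1 : 1 ≤ Real.exp (ε*δ) := by
    rw [← Real.exp_zero]
    exact Real.exp_le_exp.mpr (mul_nonneg hε.le hδ)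
  intro n
  induction n using Nat.strong_induction_on with
  | _ n IH =>
    intro hn z
    set a : ℕ → ℝ := fun i => Real.exp (-(ε * gprod (z i) (z (i+1)) p)) with ha_def
    set S : ℝ := ∑ i ∈ Finset.range n, a i with hS_def
    have hapos : ∀ i, 0 < a i := fun i => Real.exp_pos _
    have hSnn : 0 ≤ S := Finset.sum_nonneg fun i _ => (hapos i).le
    have haS : ∀ i, i < n → a i ≤ S := by
      intro i hi
      exact Finset.single_le_sum (fun j _ => (hapos j).le) (Finset.mem_range.mpr hi)
    classical
    set P : ℕ → Prop := fun m => (∑ i ∈ Finset.range m, a i) ≤ S/2 with hP_def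
    set m : ℕ := Nat.findGreatest P (n-1) with hm_def
    have hm_le : m ≤ n - 1 := Nat.findGreatest_le _
    have hPm : P m := Nat.findGreatest_spec (Nat.zero_le _) (by simp [hP_def]; linarith)
    have hgr : ∀ k, m < k → k ≤ n - 1 → ¬ P k := by
      intro k h1 h2
      exact Nat.findGreatest_is_greatest (hm_def ▸ h1) h2
    clear_value m
    have hm1n : m + 1 ≤ n := by omega
    -- left bound
    have b1 : Real.exp (-(ε * gprod (z 0) (z m) p)) ≤ S := by
      rcases Nat.eq_zero_or_pos m with hm0 | hm0
      · rw [hm0, gprod_self]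
        calc Real.exp (-(ε * dist (z 0) p)) ≤ a 0 := by
              rw [ha_def]
              exact Real.exp_le_exp.mpr (by nlinarith [gprod_le_left (z 0) (z 1) p, hε])
          _ ≤ S := haS 0 (by omega)
      · calc Real.exp (-(ε * gprod (z 0) (z m) p)) ≤
            2 * ∑ i ∈ Finset.range m, a i := IH m (by omega) hm0 z
          _ ≤ S := by rw [hP_def] at hPm; linarith [hPm]
    have b2 : a m ≤ S := haS m (by omega)
    -- right bound
    have b3 : Real.exp (-(ε * gprod (z (m+1)) (z n) p)) ≤ S := by
      rcases eq_or_lt_of_le hm1n with heq | hlt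
      · have hn1 : n - 1 + 1 = n := by omega
        have hgd : gprod (z (n-1)) (z (n-1+1)) p ≤ dist (z n) p := by
          rw [hn1]; exact gprod_le_right _ _ _
        have h1 : Real.exp (-(ε * dist (z n) p)) ≤ a (n-1) := by
          simp only [ha_def]
          exact Real.exp_le_exp.mpr (by nlinarith [hε, hgd])
        rw [heq, gprod_self]
        exact h1.trans (haS (n-1) (by omega))
      · have hkey := IH (n - (m+1)) (by omega) (by omega) (fun i => z (m+1+i))
        have he1 : m + 1 + (n - (m+1)) = n := by omega
        rw [he1] at hkey
        simp only [Nat.add_zero] at hkey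
        have hsum_eq : ∑ i ∈ Finset.range (n - (m+1)),
            Real.exp (-(ε * gprod (z (m+1+i)) (z (m+1+i+1)) p))
            = ∑ j ∈ Finset.Ico (m+1) n, a j := by
          rw [Finset.sum_Ico_eq_sum_range]
        have hIco : ∑ j ∈ Finset.Ico (m+1) n, a j ≤ S/2 := by
          have hnot : ¬ P (m+1) := hgr (m+1) (by omega) (by omega)
          simp only [hP_def] at hnot
          push_neg at hnot
          have hsplit := Finset.sum_range_add_sum_Ico a hm1n
          rw [hS_def]; linarith [hnot, hsplit]
        calc Real.exp (-(ε * gprod (z (m+1)) (z n) p))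
            ≤ 2 * ∑ i ∈ Finset.range (n - (m+1)),
                Real.exp (-(ε * gprod (z (m+1+i)) (z (m+1+i+1)) p)) := by
              convert hkey using 4 <;> simp only [add_assoc]
          _ = 2 * ∑ j ∈ Finset.Ico (m+1) n, a j := by rw [hsum_eq]
          _ ≤ S := by linarith
    -- assemble via two applications of hyperbolicity
    have step1 : Real.exp (-(ε * gprod (z 0) (z (m+1)) p)) ≤ Real.exp (ε*δ) * S := by
      calc Real.exp (-(ε * gprod (z 0) (z (m+1)) p))
          ≤ Real.exp (ε*δ) * max (Real.exp (-(ε * gprod (z 0) (z m) p)))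
              (Real.exp (-(ε * gprod (z m) (z (m+1)) p))) := hyp_exp hhyp hε p _ _ _
        _ ≤ Real.exp (ε*δ) * S := by
            apply mul_le_mul_of_nonneg_left _ (by positivity)
            exact max_le b1 b2
    have step2 : Real.exp (-(ε * gprod (z 0) (z n) p)) ≤
        Real.exp (ε*δ) * (Real.exp (ε*δ) * S) := by
      calc Real.exp (-(ε * gprod (z 0) (z n) p))
          ≤ Real.exp (ε*δ) * max (Real.exp (-(ε * gprod (z 0) (z (m+1)) p)))
              (Real.exp (-(ε * gprod (z (m+1)) (z n) p))) := hyp_exp hhyp hε p _ _ _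
        _ ≤ Real.exp (ε*δ) * (Real.exp (ε*δ) * S) := by
            apply mul_le_mul_of_nonneg_left _ (by positivity)
            apply max_le step1
            calc Real.exp (-(ε * gprod (z (m+1)) (z n) p)) ≤ S := b3
              _ ≤ Real.exp (ε*δ) * S := le_mul_of_one_le_left hSnn hlam1
    calc Real.exp (-(ε * gprod (z 0) (z n) p))
        ≤ Real.exp (ε*δ) * (Real.exp (ε*δ) * S) := step2
      _ = (Real.exp (ε*δ) * Real.exp (ε*δ)) * S := by ring
      _ ≤ 2 * S := mul_le_mul_of_nonneg_right hεδ hSnn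
end Aux3

section Aux4
variable {X : Type*} [MetricSpace X]

set_option maxHeartbeats 1000000 in
/-- Main lower bound: if `ε d(x,y) ≥ 1` then `d_ε(x,y) ≥ e^{-ε(x|y)_p}/(4e²ε)`. -/
lemma confDist_lower_main (hint : Intrinsic X) {δ : ℝ} (hδ : 0 ≤ δ) (p : X)
    (hhyp : GromovHyperbolic X δ) {ε : ℝ} (hε : 0 < ε)
    (hεδ : Real.exp (ε*δ) * Real.exp (ε*δ) ≤ 2) (x y : X)
    (hxy : 1 ≤ ε * dist x y) :
    Real.exp (-(ε * gprod x y p)) / (4 * Real.exp 1 * Real.exp 1 * ε)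
      ≤ sInf (curveSet (rho ε p) x y) := by
  apply le_csInf (curveSet_nonempty hint _ x y)
  rintro l ⟨γ, T, hT0, hγ, hγ0, hγT, rfl⟩
  have hdT : dist x y ≤ T := by
    have := hγ.dist_le (le_refl 0) hT0 (le_refl T)
    rw [hγ0, hγT] at this; linarith
  have hT1 : 1 ≤ ε * T := le_trans hxy (by nlinarith [hε])
  have hTpos : 0 < T := by nlinarith [hε]
  set n : ℕ := ⌈ε*T⌉₊ with hn_def
  have hn1 : 1 ≤ n := by
    rw [hn_def]
    exact Nat.one_le_ceil_iff.mpr (by nlinarith)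
  have hnr : (1:ℝ) ≤ (n:ℝ) := by exact_mod_cast hn1
  have hnpos : (0:ℝ) < n := by linarith
  have hceil1 : ε * T ≤ (n:ℝ) := by rw [hn_def]; exact Nat.le_ceil _
  have hceil2 : (n:ℝ) ≤ 2 * (ε * T) := by
    have h1 : ((⌈ε*T⌉₊ : ℕ) : ℝ) < ε*T + 1 := Nat.ceil_lt_add_one (by positivity)
    rw [hn_def]; nlinarith
  set h : ℝ := T / n with hh_def
  have hh0 : 0 < h := by rw [hh_def]; positivity
  have hhle : ε * h ≤ 1 := by
    have he : ε * h = (ε*T)/(n:ℝ) := by rw [hh_def]; ring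
    rw [he, div_le_one hnpos]
    exact hceil1
  have hnhT : (n:ℝ) * h = T := by rw [hh_def]; field_simp
  have hhge : 1/(2*ε) ≤ h := by
    rw [hh_def, div_le_div_iff₀ (by positivity : (0:ℝ) < 2*ε) hnpos]
    nlinarith
  -- subdivision nodes
  have hnode : ∀ i : ℕ, i ≤ n → (i:ℝ)*h ∈ Icc (0:ℝ) T := by
    intro i hi
    constructor
    · positivity
    · rw [← hnhT]
      have : (i:ℝ) ≤ n := by exact_mod_cast hi
      nlinarith
  have hcont : ContinuousOn (fun t => rho ε p (γ t)) (Icc 0 T) :=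
    (continuous_rho ε p).comp_continuousOn hγ.1
  have hii : ∀ k, k < n → IntervalIntegrable (fun t => rho ε p (γ t)) volume
      ((fun i : ℕ => (i:ℝ)*h) k) ((fun i : ℕ => (i:ℝ)*h) (k+1)) := by
    intro k hk
    simp only []
    have hc1 : ((k+1:ℕ):ℝ) = (k:ℝ)+1 := by push_cast; ring
    rw [hc1]
    have h1 : (k:ℝ)*h ≤ ((k:ℝ)+1)*h := by nlinarith
    have hup : ((k:ℝ)+1)*h ≤ T := by
      have h2 := (hnode (k+1) (by omega)).2
      rw [hc1] at h2; exact h2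
    have hsub : Icc ((k:ℝ)*h) (((k:ℝ)+1)*h) ⊆ Icc 0 T :=
      Icc_subset_Icc (hnode k (by omega)).1 hup
    refine ((hcont.mono hsub).mono ?_).intervalIntegrable
    rw [uIcc_of_le h1]
  have hsplit := intervalIntegral.sum_integral_adjacent_intervals hii
  simp only [Nat.cast_zero, zero_mul, hnhT] at hsplit
  -- per-piece lower bound
  have hpiece : ∀ k, k < n →
      h * (Real.exp (-(ε*(2*h))) * Real.exp (-(ε * gprod (γ ((k:ℝ)*h)) (γ (((k+1:ℕ):ℝ)*h)) p)))
      ≤ ∫ t in ((k:ℝ)*h)..(((k+1:ℕ):ℝ)*h), rho ε p (γ t) := by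
    intro k hk
    have hc1 : ((k+1:ℕ):ℝ) = (k:ℝ)+1 := by push_cast; ring
    have hk1 : ((k+1:ℕ):ℝ)*h ≤ T := (hnode (k+1) (by omega)).2
    have hk0 : 0 ≤ (k:ℝ)*h := by positivity
    have hkk : (k:ℝ)*h ≤ ((k+1:ℕ):ℝ)*h := by rw [hc1]; nlinarith
    -- pointwise bound on the piece
    have hpt : ∀ t ∈ Icc ((k:ℝ)*h) (((k+1:ℕ):ℝ)*h),
        Real.exp (-(ε*(2*h))) * Real.exp (-(ε * gprod (γ ((k:ℝ)*h)) (γ (((k+1:ℕ):ℝ)*h)) p))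
        ≤ rho ε p (γ t) := by
      intro t ht
      have hd1 : dist (γ ((k:ℝ)*h)) (γ t) ≤ t - (k:ℝ)*h :=
        hγ.dist_le hk0 ht.1 (ht.2.trans hk1)
      have hd2 := dist_triangle (γ t) (γ ((k:ℝ)*h)) p
      rw [dist_comm (γ t) (γ ((k:ℝ)*h))] at hd2
      have hd3 : dist (γ ((k:ℝ)*h)) (γ (((k+1:ℕ):ℝ)*h)) ≤ h := by
        have h5 := hγ.dist_le hk0 hkk hk1
        rw [hc1] at h5 ⊢
        linarith
      have hd4 := dist_le_gprod_add (γ ((k:ℝ)*h)) (γ (((k+1:ℕ):ℝ)*h)) p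
      unfold rho
      rw [← Real.exp_add]
      apply Real.exp_le_exp.mpr
      have htu : t ≤ (k:ℝ)*h + h := by
        have h6 := ht.2; rw [hc1] at h6; nlinarith
      have hdist : dist (γ t) p ≤ gprod (γ ((k:ℝ)*h)) (γ (((k+1:ℕ):ℝ)*h)) p + 2*h := by
        linarith
      nlinarith [mul_le_mul_of_nonneg_left hdist hε.le]
    calc h * (Real.exp (-(ε*(2*h))) * Real.exp (-(ε * gprod (γ ((k:ℝ)*h)) (γ (((k+1:ℕ):ℝ)*h)) p)))
        = ∫ _t in ((k:ℝ)*h)..(((k+1:ℕ):ℝ)*h),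
            (Real.exp (-(ε*(2*h))) * Real.exp (-(ε * gprod (γ ((k:ℝ)*h)) (γ (((k+1:ℕ):ℝ)*h)) p))) := by
          rw [intervalIntegral.integral_const, smul_eq_mul, hc1]
          ring
      _ ≤ ∫ t in ((k:ℝ)*h)..(((k+1:ℕ):ℝ)*h), rho ε p (γ t) := by
          apply intervalIntegral.integral_mono_on hkk intervalIntegrable_const (hii k hk)
          exact hpt
  -- chain lemma applied to the nodes
  have hchain := chain_lemma hδ p hhyp hε hεδ n hn1 (fun i => γ ((i:ℝ)*h))
  simp only [Nat.cast_zero, zero_mul, hnhT] at hchain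
  rw [hγ0, hγT] at hchain
  -- sum the pieces
  have hsum : ∑ k ∈ Finset.range n,
      h * (Real.exp (-(ε*(2*h))) * Real.exp (-(ε * gprod (γ ((k:ℝ)*h)) (γ (((k+1:ℕ):ℝ)*h)) p)))
      ≤ ∫ t in (0:ℝ)..T, rho ε p (γ t) := by
    rw [← hsplit]
    exact Finset.sum_le_sum fun k hk => hpiece k (Finset.mem_range.mp hk)
  -- put everything together
  have hfactor : ∑ k ∈ Finset.range n,
      h * (Real.exp (-(ε*(2*h))) * Real.exp (-(ε * gprod (γ ((k:ℝ)*h)) (γ (((k+1:ℕ):ℝ)*h)) p)))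
      = h * Real.exp (-(ε*(2*h))) * ∑ k ∈ Finset.range n,
          Real.exp (-(ε * gprod (γ ((k:ℝ)*h)) (γ (((k+1:ℕ):ℝ)*h)) p)) := by
    rw [Finset.mul_sum]
    exact Finset.sum_congr rfl fun k _ => by ring
  have hchain' : Real.exp (-(ε * gprod x y p)) / 2 ≤
      ∑ k ∈ Finset.range n, Real.exp (-(ε * gprod (γ ((k:ℝ)*h)) (γ (((k+1:ℕ):ℝ)*h)) p)) := by
    linarith [hchain]
  have hexp2 : Real.exp (-(2:ℝ)) ≤ Real.exp (-(ε*(2*h))) := by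
    apply Real.exp_le_exp.mpr
    nlinarith [hhle, hε, hh0]
  have hS0 : 0 ≤ ∑ k ∈ Finset.range n,
      Real.exp (-(ε * gprod (γ ((k:ℝ)*h)) (γ (((k+1:ℕ):ℝ)*h)) p)) :=
    Finset.sum_nonneg fun k _ => (Real.exp_pos _).le
  have hfin : Real.exp (-(ε * gprod x y p)) / (4 * Real.exp 1 * Real.exp 1 * ε)
      ≤ h * Real.exp (-(ε*(2*h))) * ∑ k ∈ Finset.range n,
          Real.exp (-(ε * gprod (γ ((k:ℝ)*h)) (γ (((k+1:ℕ):ℝ)*h)) p)) := by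
    have hee : Real.exp (-(2:ℝ)) = 1/(Real.exp 1 * Real.exp 1) := by
      rw [← Real.exp_add, eq_div_iff (Real.exp_pos _).ne', ← Real.exp_add]
      norm_num
    have hq : 1/(2*ε) * Real.exp (-(2:ℝ)) * (Real.exp (-(ε * gprod x y p)) / 2)
        = Real.exp (-(ε * gprod x y p)) / (4 * Real.exp 1 * Real.exp 1 * ε) := by
      rw [hee]
      field_simp
      ring
    rw [← hq]
    have hstep : 1/(2*ε) * Real.exp (-(2:ℝ)) ≤ h * Real.exp (-(ε*(2*h))) :=
      mul_le_mul hhge hexp2 (Real.exp_pos _).le hh0.le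
    exact mul_le_mul hstep hchain' (by positivity) (by positivity)
  calc Real.exp (-(ε * gprod x y p)) / (4 * Real.exp 1 * Real.exp 1 * ε)
      ≤ h * Real.exp (-(ε*(2*h))) * ∑ k ∈ Finset.range n,
          Real.exp (-(ε * gprod (γ ((k:ℝ)*h)) (γ (((k+1:ℕ):ℝ)*h)) p)) := hfin
    _ = ∑ k ∈ Finset.range n,
        h * (Real.exp (-(ε*(2*h))) * Real.exp (-(ε * gprod (γ ((k:ℝ)*h)) (γ (((k+1:ℕ):ℝ)*h)) p))) := hfactor.symm
    _ ≤ ∫ t in (0:ℝ)..T, rho ε p (γ t) := hsum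
end Aux4

section Main
variable {X : Type*} [MetricSpace X]

lemma confDist_nonneg' {ε : ℝ} (p x y : X) : 0 ≤ sInf (curveSet (rho ε p) x y) :=
  Real.sInf_nonneg (curveSet_nonneg (rho_nonneg ε p))

theorem main_thm (δ : ℝ) (hδ : 0 ≤ δ) (p : X)
    (hint : Intrinsic X) (hhyp : GromovHyperbolic X δ) :
    ∃ ε₀ : ℝ, 0 < ε₀ ∧ ∀ ε : ℝ, 0 < ε → ε ≤ ε₀ →
      (∀ u : ℕ → X, (Filter.Tendsto (fun nm : ℕ × ℕ => gprod (u nm.1) (u nm.2) p)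
          Filter.atTop Filter.atTop) →
        (∀ η : ℝ, 0 < η → ∃ N : ℕ, ∀ m n : ℕ, N ≤ m → N ≤ n →
          sInf (curveSet (rho ε p) (u m) (u n)) < η) ∧
        (¬ ∃ z : X, Filter.Tendsto (fun n => sInf (curveSet (rho ε p) (u n) z))
          Filter.atTop (nhds 0))) ∧
      (∀ u v : ℕ → X,
        (Filter.Tendsto (fun nm : ℕ × ℕ => gprod (u nm.1) (u nm.2) p)
          Filter.atTop Filter.atTop) →
        (Filter.Tendsto (fun nm : ℕ × ℕ => gprod (v nm.1) (v nm.2) p)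
          Filter.atTop Filter.atTop) →
        (Filter.Tendsto (fun n => gprod (u n) (v n) p) Filter.atTop Filter.atTop ↔
          Filter.Tendsto (fun n => sInf (curveSet (rho ε p) (u n) (v n)))
            Filter.atTop (nhds 0))) := by
  refine ⟨Real.log 2 / (2*(δ+1)), div_pos (Real.log_pos one_lt_two) (by linarith), ?_⟩
  intro ε hε hεle
  have hεδ2 : Real.exp (ε*δ) * Real.exp (ε*δ) ≤ 2 := by
    rw [← Real.exp_add]
    have h1 : ε * (2*(δ+1)) ≤ Real.log 2 := by
      rw [← le_div_iff₀ (by linarith : (0:ℝ) < 2*(δ+1))]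
      exact hεle
    have h2 : ε*δ + ε*δ ≤ Real.log 2 := by nlinarith [hε.le]
    calc Real.exp (ε*δ + ε*δ) ≤ Real.exp (Real.log 2) := Real.exp_le_exp.mpr h2
      _ = 2 := Real.exp_log two_pos
  -- distance to base point diverges along a Gromov sequence
  have hdist : ∀ u : ℕ → X, (Filter.Tendsto (fun nm : ℕ × ℕ => gprod (u nm.1) (u nm.2) p)
      Filter.atTop Filter.atTop) → Tendsto (fun n => dist (u n) p) atTop atTop := by
    intro u hu
    have h1 : Tendsto (fun n : ℕ => ((n, n) : ℕ × ℕ)) atTop atTop := by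
      rw [← Filter.prod_atTop_atTop_eq]
      exact Filter.Tendsto.prodMk tendsto_id tendsto_id
    have h2 := hu.comp h1
    exact h2.congr fun n => by simp [Function.comp, gprod_self]
  -- the standard "upper bound tends to zero" helper
  have hzero : ∀ {α : Type} {l : Filter α} (w : α → ℝ), Tendsto w l atTop →
      Tendsto (fun n => (2*Real.exp 1/ε) * Real.exp (-(ε * w n))) l (nhds 0) := by
    intro α l w hw
    have h1 : Tendsto (fun n => -(ε * w n)) l atBot :=
      tendsto_neg_atTop_atBot.comp (hw.const_mul_atTop hε)
    have h2 := (Real.tendsto_exp_atBot.comp h1).const_mul (2*Real.exp 1/ε)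
    simpa using h2
  constructor
  · intro u hu
    have hd := hdist u hu
    constructor
    · -- Cauchy
      intro η hη
      have h2 : Tendsto (fun nm : ℕ × ℕ =>
          (2*Real.exp 1/ε) * Real.exp (-(ε * gprod (u nm.1) (u nm.2) p))) atTop (nhds 0) :=
        hzero _ hu
      have h3 := h2.eventually_lt_const hη
      obtain ⟨N, hN⟩ := Filter.eventually_atTop.mp h3
      refine ⟨max N.1 N.2, fun a b ha hb => ?_⟩
      have h4 := hN (a, b) (Prod.le_def.mpr
        ⟨le_trans (le_max_left _ _) ha, le_trans (le_max_right _ _) hb⟩)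
      calc sInf (curveSet (rho ε p) (u a) (u b))
          ≤ (2*Real.exp 1/ε) * Real.exp (-(ε * gprod (u a) (u b) p)) :=
            confDist_upper hint hε p (u a) (u b)
        _ < η := h4
    · -- no limit in X
      rintro ⟨z, hz⟩
      have hexp1 : Real.exp (-(1:ℝ)) < 1 := by
        rw [← Real.exp_zero]
        exact Real.exp_lt_exp.mpr (by norm_num)
      have hc0 : 0 < (1/ε) * Real.exp (-(ε * dist z p)) * (1 - Real.exp (-(1:ℝ))) := by
        apply mul_pos (mul_pos (by positivity) (Real.exp_pos _))
        linarith
      have hev1 : ∀ᶠ n in atTop, dist z p + 1/ε ≤ dist (u n) p := hd.eventually_ge_atTop _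
      have hev2 := hz.eventually_lt_const hc0
      obtain ⟨n, h1, h2⟩ := (hev1.and hev2).exists
      have h3 : 1/ε ≤ dist (u n) z := by
        have := dist_triangle (u n) z p
        linarith
      have h4 := confDist_lower_cheap hint hε p (u n) z
      have h5 : Real.exp (-(ε * dist (u n) z)) ≤ Real.exp (-(1:ℝ)) := by
        apply Real.exp_le_exp.mpr
        have h6 := mul_le_mul_of_nonneg_left h3 hε.le
        rw [mul_one_div_cancel hε.ne'] at h6
        linarith
      have h7 : (1/ε) * Real.exp (-(ε * dist z p)) * (1 - Real.exp (-(1:ℝ)))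
          ≤ (1/ε) * Real.exp (-(ε * dist z p)) * (1 - Real.exp (-(ε * dist (u n) z))) := by
        apply mul_le_mul_of_nonneg_left _ (by positivity)
        linarith
      linarith
  · intro u v hu hv
    have hdu := hdist u hu
    constructor
    · -- equivalent ⟹ confDist → 0
      intro hg
      apply squeeze_zero (fun n => confDist_nonneg' p (u n) (v n))
        (fun n => confDist_upper hint hε p (u n) (v n)) (hzero _ hg)
    · -- confDist → 0 ⟹ equivalent
      intro hconf
      rw [Filter.tendsto_atTop]
      intro M
      have hc : 0 < Real.exp (-(ε*M)) / (4*Real.exp 1*Real.exp 1*ε) := by positivity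
      have hev1 : ∀ᶠ n in atTop, M + 1/ε ≤ dist (u n) p := hdu.eventually_ge_atTop _
      have hev2 := hconf.eventually_lt_const hc
      filter_upwards [hev1, hev2] with n h1 h2
      by_cases hcase : ε * dist (u n) (v n) < 1
      · have h3 : dist (u n) (v n) ≤ 1/ε := by
          rw [le_div_iff₀ hε]
          nlinarith [hcase]
        have h4 := gprod_ge_of_dist (u n) (v n) p
        linarith
      · push_neg at hcase
        have h5 := confDist_lower_main hint hδ p hhyp hε hεδ2 (u n) (v n) hcase
        have hpos : (0:ℝ) < 4*Real.exp 1*Real.exp 1*ε := by positivity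
        have h7 := mul_lt_mul_of_pos_right (lt_of_le_of_lt h5 h2) hpos
        rw [div_mul_cancel₀ _ hpos.ne', div_mul_cancel₀ _ hpos.ne'] at h7
        have h8 := Real.exp_lt_exp.mp h7
        nlinarith [hε]
end Main

lemma confDist_eq {X : Type*} [MetricSpace X] (ρ : X → ℝ) (x y : X) :
    confDist ρ x y = sInf (curveSet ρ x y) := rfl

/-- for `0 < ε ≤ ε₀`, every Gromov sequence in an intrinsic
`δ`-hyperbolic space is `d_ε`-Cauchy without limit in `X`, and two Gromov
sequences are equivalent iff `d_ε(u_n, v_n) → 0`. -/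
theorem gromovSeq_cauchy_and_equivalence {X : Type*} [MetricSpace X]
    (δ : ℝ) (hδ : 0 ≤ δ) (p : X)
    (hint : Intrinsic X) (hhyp : GromovHyperbolic X δ) :
    ∃ ε₀ : ℝ, 0 < ε₀ ∧ ∀ ε : ℝ, 0 < ε → ε ≤ ε₀ →
      (∀ u : ℕ → X, GromovSeq p u →
        CauchyIn (confDist (rho ε p)) u ∧ DivergesIn (confDist (rho ε p)) u) ∧
      (∀ u v : ℕ → X, GromovSeq p u → GromovSeq p v →
        (Filter.Tendsto (fun n => gprod (u n) (v n) p) Filter.atTop Filter.atTop ↔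
          Filter.Tendsto (fun n => confDist (rho ε p) (u n) (v n))
            Filter.atTop (nhds 0))) := by
  obtain ⟨ε₀, hε₀, H⟩ := main_thm δ hδ p hint hhyp
  refine ⟨ε₀, hε₀, ?_⟩
  intro ε h1 h2
  obtain ⟨H1, H2⟩ := H ε h1 h2
  constructor
  · intro u hu
    obtain ⟨C, D⟩ := H1 u hu
    constructor
    · intro η hη
      obtain ⟨N, hN⟩ := C η hη
      exact ⟨N, fun m n hm hn => by rw [confDist_eq]; exact hN m n hm hn⟩
    · intro hcon
      apply D
      obtain ⟨z, hz⟩ := hcon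
      refine ⟨z, ?_⟩
      simpa only [confDist_eq] using hz
  · intro u v hu hv
    have h3 := H2 u v hu hv
    simpa only [confDist_eq] using h3
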